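/- Fix d ≥ 1 and m ∈ ℕ. The ℝ-submodule S_m of vector fields v : Fin d → MvPolynomial (Fin d) ℝ whose components have total degree at most m and which satisfy pderiv i (v j) = pderiv j (v i) for all i, j, is finite dimensional with dimension Nat.choose (d + m + 1) d − 1. -/

import Mathlib

/-!
An irrotational polynomial field is a gradient. With the Euler operator `𝔈 = ∑ i, X i * ∂ᵢ`,
which multiplies monomials of degree `k` by `k`, put `P = ∑ i, X i * (𝔈 + 1)⁻¹ vᵢ`. Since
`∂ⱼ (𝔈 + 1)⁻¹ = (𝔈 + 2)⁻¹ ∂ⱼ` and `∂ⱼ vᵢ = ∂ᵢ vⱼ`,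
`∂ⱼ P = (𝔈 + 1)⁻¹ vⱼ + ∑ i, X i * ∂ᵢ (𝔈 + 1)⁻¹ vⱼ = (𝔈 + 1)⁻¹ vⱼ + 𝔈 (𝔈 + 1)⁻¹ vⱼ = vⱼ`.
So `S_m` is the gradient image of the polynomials of degree `≤ m + 1`, a space of dimension
`C(d + m + 1, d)` by stars and bars, and the kernel of the gradient is the constants.
-/

open MvPolynomial

/-- The space `S_m` of irrotational polynomial vector fields of degree at
most `m` in `d` variables: each component has total degree at most `m` and
the formal Jacobian is symmetric (curl-free condition). -/
noncomputable def irrotationalSpace (d m : ℕ) :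
    Submodule ℝ (Fin d → MvPolynomial (Fin d) ℝ) where
  carrier := {v | (∀ i : Fin d, (v i).totalDegree ≤ m) ∧
    ∀ i j : Fin d, pderiv i (v j) = pderiv j (v i)}
  add_mem' := by
    rintro a b ⟨ha1, ha2⟩ ⟨hb1, hb2⟩
    refine ⟨fun i => ?_, fun i j => ?_⟩
    · exact le_trans (totalDegree_add (a i) (b i))
        (max_le (ha1 i) (hb1 i))
    · simp only [Pi.add_apply, map_add, ha2 i j, hb2 i j]
  zero_mem' := by
    refine ⟨fun i => ?_, fun i j => ?_⟩ <;> simp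
  smul_mem' := by
    rintro c a ⟨ha1, ha2⟩
    refine ⟨fun i => ?_, fun i j => ?_⟩
    · exact le_trans (totalDegree_smul_le c (a i)) (ha1 i)
    · simp [ha2 i j]

namespace Finsupp

variable {σ : Type*}

theorem degree_option (t : Option σ →₀ ℕ) : t.degree = t none + t.some.degree :=
  t.sum_option_index (fun _ => id) (fun _ => rfl) (fun _ _ _ => rfl)

/-- The exponent of the extra variable `none` absorbs the missing degree. -/
noncomputable def degreeLeEquivDegreeEqOption (N : ℕ) :
    {s : σ →₀ ℕ // s.degree ≤ N} ≃ {t : Option σ →₀ ℕ // t.degree = N} where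
  toFun s := ⟨s.1.optionElim (N - s.1.degree), by
    rw [degree_option, optionElim_apply_none, some_optionElim]
    exact Nat.sub_add_cancel s.2⟩
  invFun t := ⟨t.1.some, by
    have h := degree_option t.1
    rw [t.2] at h
    omega⟩
  left_inv s := Subtype.ext (some_optionElim _ _)
  right_inv := by
    rintro ⟨t, rfl⟩
    ext1
    change optionElim (t.degree - t.some.degree) t.some = t
    rw [degree_option, Nat.add_sub_cancel, optionElim_some]

theorem card_degree_le [Fintype σ] (N : ℕ) :
    Nat.card {s : σ →₀ ℕ // s.degree ≤ N} = (Fintype.card σ + N).choose (Fintype.card σ) := by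
  classical
  rw [Nat.card_congr ((degreeLeEquivDegreeEqOption N).trans (Sym.equivNatSum (Option σ) N).symm),
    Nat.card_eq_fintype_card, Sym.card_sym_eq_choose, Fintype.card_option,
    add_right_comm, Nat.add_sub_cancel, Nat.choose_symm_add]

end Finsupp

namespace MvPolynomial

section CommSemiring

variable {σ R : Type*} [CommSemiring R]

noncomputable def grad : MvPolynomial σ R →ₗ[R] σ → MvPolynomial σ R :=
  LinearMap.pi fun i => (pderiv i).toLinearMap

@[simp]
theorem grad_apply (p : MvPolynomial σ R) (i : σ) : grad p i = pderiv i p := rfl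

theorem totalDegree_pderiv_le (i : σ) (p : MvPolynomial σ R) :
    (pderiv i p).totalDegree ≤ p.totalDegree - 1 := by
  refine Finset.sup_le fun s hs => ?_
  rw [mem_support_iff, coeff_pderiv] at hs
  have hle := le_totalDegree (mem_support_iff.mpr (left_ne_zero_of_mul hs))
  change (s + Finsupp.single i 1).degree ≤ _ at hle
  rw [map_add, Finsupp.degree_single] at hle
  change s.degree ≤ _
  omega

end CommSemiring

theorem pderiv_comm {σ R : Type*} [CommRing R] (i j : σ) (p : MvPolynomial σ R) :
    pderiv i (pderiv j p) = pderiv j (pderiv i p) := by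
  have h : ⁅pderiv i, pderiv j⁆ = (0 : Derivation R (MvPolynomial σ R) (MvPolynomial σ R)) :=
    derivation_ext fun k => by
      rw [Derivation.commutator_apply]
      classical simp [pderiv_X, Pi.single_apply, apply_ite]
  have hp := congr($h p)
  rw [Derivation.commutator_apply] at hp
  simpa [sub_eq_zero] using hp

variable {σ K : Type*} [Field K]

/-- `(𝔈 + c)⁻¹` for the Euler operator `𝔈 = ∑ i, X i * pderiv i`. -/
noncomputable def invEulerAdd (c : ℕ) : MvPolynomial σ K →ₗ[K] MvPolynomial σ K :=
  (basisMonomials σ K).constr K fun s => ((s.degree + c : ℕ) : K)⁻¹ • monomial s 1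

theorem invEulerAdd_monomial (c : ℕ) (s : σ →₀ ℕ) (a : K) :
    invEulerAdd c (monomial s a) = ((s.degree + c : ℕ) : K)⁻¹ • monomial s a := by
  have h : invEulerAdd c (monomial s (1 : K)) = ((s.degree + c : ℕ) : K)⁻¹ • monomial s 1 :=
    (basisMonomials σ K).constr_basis K _ s
  rw [← mul_one a, ← smul_eq_mul, ← smul_monomial, map_smul, h, smul_comm]

theorem coeff_invEulerAdd (c : ℕ) (s : σ →₀ ℕ) (p : MvPolynomial σ K) :
    coeff s (invEulerAdd c p) = ((s.degree + c : ℕ) : K)⁻¹ * coeff s p := by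
  classical
  induction p using MvPolynomial.induction_on' with
  | add p q hp hq => simp only [map_add, coeff_add, hp, hq, mul_add]
  | monomial t a =>
    rw [invEulerAdd_monomial, coeff_smul, coeff_monomial, smul_eq_mul]
    split_ifs with h <;> simp [h]

theorem totalDegree_invEulerAdd_le (c : ℕ) (p : MvPolynomial σ K) :
    (invEulerAdd c p).totalDegree ≤ p.totalDegree :=
  totalDegree_le_of_support_subset fun s hs => by
    rw [mem_support_iff, coeff_invEulerAdd] at hs
    exact mem_support_iff.mpr (right_ne_zero_of_mul hs)

theorem pderiv_invEulerAdd (c : ℕ) (i : σ) (p : MvPolynomial σ K) :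
    pderiv i (invEulerAdd c p) = invEulerAdd (c + 1) (pderiv i p) := by
  induction p using MvPolynomial.induction_on' with
  | add p q hp hq => simp only [map_add, hp, hq]
  | monomial s a =>
    rw [invEulerAdd_monomial, Derivation.map_smul, pderiv_monomial, invEulerAdd_monomial]
    by_cases h : s i = 0
    · simp [h]
    · have hs := congrArg Finsupp.degree (Finsupp.sub_add_single_one_cancel h)
      rw [map_add, Finsupp.degree_single] at hs
      rw [← hs, add_right_comm, add_assoc]

theorem sum_X_mul_pderiv_invEulerAdd [Fintype σ] [CharZero K] {c : ℕ} (hc : c ≠ 0)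
    (p : MvPolynomial σ K) :
    ∑ i, X i * pderiv i (invEulerAdd c p) + c • invEulerAdd c p = p := by
  induction p using MvPolynomial.induction_on' with
  | add p q hp hq =>
    simp only [map_add, mul_add, Finset.sum_add_distrib, smul_add]
    rw [add_add_add_comm, hp, hq]
  | monomial s a =>
    have hs : (s.degree : K) + c ≠ 0 := by exact_mod_cast (show s.degree + c ≠ 0 by omega)
    simp only [invEulerAdd_monomial, Derivation.map_smul, mul_smul_comm, ← Finset.smul_sum,
      (isHomogeneous_monomial a rfl).sum_X_mul_pderiv]
    rw [← Nat.cast_smul_eq_nsmul K, ← Nat.cast_smul_eq_nsmul K, smul_smul, smul_smul, ← add_smul,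
      Nat.cast_add, mul_comm (c : K), ← mul_add, inv_mul_cancel₀ hs, one_smul]

theorem grad_sum_X_mul_invEulerAdd [Fintype σ] [CharZero K] (v : σ → MvPolynomial σ K)
    (hv : ∀ i j, pderiv i (v j) = pderiv j (v i)) :
    grad (∑ i, X i * invEulerAdd 1 (v i)) = v := by
  classical
  funext j
  have euler := sum_X_mul_pderiv_invEulerAdd one_ne_zero (v j)
  simp only [pderiv_invEulerAdd, one_smul] at euler
  simp only [grad_apply, map_sum, pderiv_mul, pderiv_X, Pi.single_apply, ite_mul, one_mul,
    zero_mul, Finset.sum_add_distrib, Finset.sum_ite_eq', Finset.mem_univ, if_true,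
    pderiv_invEulerAdd, hv j]
  rw [add_comm, euler]

theorem totalDegree_sum_X_mul_invEulerAdd_le [Fintype σ] {m : ℕ} (v : σ → MvPolynomial σ K)
    (hv : ∀ i, (v i).totalDegree ≤ m) :
    (∑ i, X i * invEulerAdd 1 (v i)).totalDegree ≤ m + 1 := by
  refine (totalDegree_finsetSum _ _).trans (Finset.sup_le fun i _ => ?_)
  refine (totalDegree_mul _ _).trans ?_
  rw [totalDegree_X, add_comm]
  exact Nat.add_le_add_right ((totalDegree_invEulerAdd_le 1 (v i)).trans (hv i)) 1

theorem eq_C_coeff_zero_of_forall_pderiv_eq_zero [CharZero K] {p : MvPolynomial σ K}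
    (h : ∀ i, pderiv i p = 0) : p = C (coeff 0 p) := by
  classical
  ext s
  rw [coeff_C]
  split_ifs with hs
  · rw [hs]
  obtain ⟨i, hi⟩ : ∃ i, s i ≠ 0 := by simpa [Finsupp.ext_iff] using Ne.symm hs
  have hcoeff := coeff_pderiv (i := i) p (s - Finsupp.single i 1)
  rw [h i, coeff_zero, Finsupp.sub_add_single_one_cancel hi, eq_comm, mul_eq_zero] at hcoeff
  exact hcoeff.resolve_right (Nat.cast_add_one_ne_zero _)

theorem ker_grad [CharZero K] : LinearMap.ker (grad : MvPolynomial σ K →ₗ[K] _) = K ∙ 1 := by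
  ext p
  rw [LinearMap.mem_ker, Submodule.mem_span_singleton]
  refine ⟨fun h => ⟨coeff 0 p, ?_⟩, ?_⟩
  · rw [smul_eq_C_mul, mul_one]
    exact (eq_C_coeff_zero_of_forall_pderiv_eq_zero (congr_fun h)).symm
  · rintro ⟨a, rfl⟩
    funext i
    rw [grad_apply, Derivation.map_smul, pderiv_one, smul_zero, Pi.zero_apply]

theorem finrank_map_grad_add_one [CharZero K] (W : Submodule K (MvPolynomial σ K))
    [FiniteDimensional K W] (hW : 1 ∈ W) :
    Module.finrank K (W.map grad) + 1 = Module.finrank K W := by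
  have hker : LinearMap.ker grad ≤ W := by
    rwa [ker_grad, Submodule.span_singleton_le_iff_mem]
  rw [← LinearMap.finrank_range_add_finrank_ker (grad.domRestrict W), LinearMap.range_domRestrict,
    LinearMap.ker_domRestrict, (Submodule.comapSubtypeEquivOfLe hker).finrank_eq, ker_grad,
    finrank_span_singleton one_ne_zero]

theorem finrank_restrictTotalDegree [Fintype σ] (N : ℕ) :
    Module.finrank K (restrictTotalDegree σ K N) =
      (Fintype.card σ + N).choose (Fintype.card σ) := by
  rw [restrictTotalDegree, Module.finrank_eq_nat_card_basis (basisRestrictSupport K _)]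
  exact Finsupp.card_degree_le N

end MvPolynomial

theorem irrotationalSpace_eq_map_grad (d m : ℕ) :
    irrotationalSpace d m = (restrictTotalDegree (Fin d) ℝ (m + 1)).map grad := by
  refine le_antisymm ?_ ?_
  · rintro v ⟨hdeg, hcurl⟩
    exact ⟨_, (mem_restrictTotalDegree _ _ _).mpr (totalDegree_sum_X_mul_invEulerAdd_le v hdeg),
      grad_sum_X_mul_invEulerAdd v hcurl⟩
  · rintro _ ⟨p, hp, rfl⟩
    rw [SetLike.mem_coe, mem_restrictTotalDegree] at hp
    exact ⟨fun i => (totalDegree_pderiv_le i p).trans (by omega), fun i j => pderiv_comm i j p⟩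

theorem finrank_irrotationalSpace_general (d m : ℕ) :
    FiniteDimensional ℝ (irrotationalSpace d m) ∧
      Module.finrank ℝ (irrotationalSpace d m) =
        Nat.choose (d + m + 1) d - 1 := by
  rw [irrotationalSpace_eq_map_grad]
  refine ⟨inferInstance, ?_⟩
  have h := finrank_map_grad_add_one (restrictTotalDegree (Fin d) ℝ (m + 1))
    ((mem_restrictTotalDegree _ _ _).mpr (by simp))
  rw [finrank_restrictTotalDegree, Fintype.card_fin, ← add_assoc] at h
  omega

/-- `S_m` is finite dimensional of dimension `C(d + m + 1, d) − 1`,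
the dimension of polynomials of total degree ≤ m + 1 minus the constants. -/
theorem finrank_irrotationalSpace (d m : ℕ) (hd : 1 ≤ d) :
    FiniteDimensional ℝ (irrotationalSpace d m) ∧
      Module.finrank ℝ (irrotationalSpace d m) =
        Nat.choose (d + m + 1) d - 1 :=
  finrank_irrotationalSpace_general d m
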